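/- Let (L,⋆) be a left Leibniz algebra over a field K of characteristic zero, i.e. ⋆ is bilinear and x⋆(y⋆z) = (x⋆y)⋆z + y⋆(x⋆z) for all x,y,z in L. Define [x,y] := x⋆y - y⋆x and {x,y,z} := -(x⋆y)⋆z for all x,y,z in L. Then (L,[-,-],{-,-,-}) is a Lie-Yamaguti algebra. -/

import Mathlib

/-- The binary bracket associated to a Leibniz algebra: `[x,y] := x⋆y - y⋆x`. -/
def brL {K L : Type*} [Field K] [AddCommGroup L] [Module K L]
    (mul : L →ₗ[K] L →ₗ[K] L) (x y : L) : L := mul x y - mul y x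

/-- The ternary bracket associated to a Leibniz algebra: `{x,y,z} := -(x⋆y)⋆z`. -/
def trL {K L : Type*} [Field K] [AddCommGroup L] [Module K L]
    (mul : L →ₗ[K] L →ₗ[K] L) (x y z : L) : L := -(mul (mul x y) z)

/-!
The Leibniz identity says that every left multiplication `L_u = u ⋆ -` is a derivation of `⋆`,
equivalently `L_{x⋆y} = ⁅L_x, L_y⁆` in `End L`. Hence `{x,y,-} = -⁅L_x, L_y⁆` is skew in `x, y`
(LY2), and `L_{[x,y]} = 2 ⁅L_x, L_y⁆`, so (LY4) is twice the Jacobi identity of `End L`.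
Since `L_{a⋆b}` is a derivation of `⋆`, it is one of both brackets, which is (LY5) and (LY6).
Finally (LY3) holds because rewriting every left-nested product `(x⋆y)⋆z` as `x⋆(y⋆z) - y⋆(x⋆z)`
leaves right-normed words only, and these cancel.
-/

attribute [local instance] LieRing.ofAssociativeRing

section LeibnizRing

variable {R M : Type*} [CommSemiring R] [AddCommGroup M] [Module R M] {mul : M →ₗ[R] M →ₗ[R] M}

theorem mul_mul_apply_of_leibniz
    (hleib : ∀ x y z, mul x (mul y z) = mul (mul x y) z + mul y (mul x z)) (x y z : M) :
    mul (mul x y) z = mul x (mul y z) - mul y (mul x z) := by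
  rw [hleib x y z]; abel

theorem mul_mul_eq_lie_of_leibniz
    (hleib : ∀ x y z, mul x (mul y z) = mul (mul x y) z + mul y (mul x z)) (x y : M) :
    mul (mul x y) = ⁅mul x, mul y⁆ := by
  ext z
  simp only [Ring.lie_def, LinearMap.sub_apply, Module.End.mul_apply,
    mul_mul_apply_of_leibniz hleib]

end LeibnizRing

section LieYamaguti

variable {K L : Type*} [Field K] [AddCommGroup L] [Module K L] {mul : L →ₗ[K] L →ₗ[K] L}

theorem brL_skew (mul : L →ₗ[K] L →ₗ[K] L) (x y : L) : brL mul x y = -brL mul y x := by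
  simp only [brL, neg_sub]

variable (hleib : ∀ x y z, mul x (mul y z) = mul (mul x y) z + mul y (mul x z))
include hleib

theorem trL_eq_neg_lie_apply (x y z : L) : trL mul x y z = -⁅mul x, mul y⁆ z := by
  rw [trL, mul_mul_eq_lie_of_leibniz hleib]

theorem trL_skew (x y z : L) : trL mul x y z = -trL mul y x z := by
  rw [trL_eq_neg_lie_apply hleib, trL_eq_neg_lie_apply hleib, ← lie_skew (mul x),
    LinearMap.neg_apply]

theorem mul_brL_eq_two_nsmul_lie (x y : L) : mul (brL mul x y) = 2 • ⁅mul x, mul y⁆ := by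
  rw [brL, map_sub, mul_mul_eq_lie_of_leibniz hleib, mul_mul_eq_lie_of_leibniz hleib,
    ← lie_skew (mul y), sub_neg_eq_add, two_nsmul]

theorem trL_brL_cyclic (x y z a : L) :
    trL mul (brL mul x y) z a + trL mul (brL mul z x) y a + trL mul (brL mul y z) x a = 0 := by
  have jacobi :
      ⁅⁅mul x, mul y⁆, mul z⁆ + ⁅⁅mul z, mul x⁆, mul y⁆ + ⁅⁅mul y, mul z⁆, mul x⁆ = 0 := by
    rw [← lie_skew ⁅mul x, mul y⁆, ← lie_skew ⁅mul z, mul x⁆, ← lie_skew ⁅mul y, mul z⁆,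
      ← neg_zero, ← lie_jacobi (mul z) (mul x) (mul y)]
    abel
  simp only [trL_eq_neg_lie_apply hleib, mul_brL_eq_two_nsmul_lie hleib, nsmul_lie,
    ← neg_add, ← LinearMap.add_apply, ← smul_add, jacobi, smul_zero, LinearMap.zero_apply,
    neg_zero]

theorem mul_brL (u x y : L) :
    mul u (brL mul x y) = brL mul (mul u x) y + brL mul x (mul u y) := by
  simp only [brL, map_sub, hleib u]; abel

theorem trL_brL_leibniz (a b x y : L) :
    trL mul a b (brL mul x y) = brL mul (trL mul a b x) y + brL mul x (trL mul a b y) := by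
  simp only [trL, mul_brL hleib]
  simp only [brL, map_neg, LinearMap.neg_apply]; abel

theorem trL_trL_leibniz (a b x y z : L) :
    trL mul a b (trL mul x y z)
      = trL mul (trL mul a b x) y z + trL mul x (trL mul a b y) z
        + trL mul x y (trL mul a b z) := by
  simp only [trL, map_neg, LinearMap.neg_apply, neg_neg, hleib (mul a b) (mul x y) z,
    hleib (mul a b) x y, map_add, LinearMap.add_apply]

theorem brL_brL_cyclic_add_trL_cyclic (x y z : L) :
    brL mul (brL mul x y) z + brL mul (brL mul y z) x + brL mul (brL mul z x) y
      + trL mul x y z + trL mul y z x + trL mul z x y = 0 := by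
  simp only [brL, trL, map_sub, LinearMap.sub_apply, mul_mul_apply_of_leibniz hleib]; abel

end LieYamaguti

theorem leibniz_isLieYamaguti_general (K L : Type*) [Field K]
    [AddCommGroup L] [Module K L] (mul : L →ₗ[K] L →ₗ[K] L)
    (hleib : ∀ x y z, mul x (mul y z) = mul (mul x y) z + mul y (mul x z)) :
    (∀ x y, brL mul x y = - brL mul y x) ∧
    (∀ x y z, trL mul x y z = - trL mul y x z) ∧
    (∀ x y z,
      brL mul (brL mul x y) z + brL mul (brL mul y z) x + brL mul (brL mul z x) y
        + trL mul x y z + trL mul y z x + trL mul z x y = 0) ∧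
    (∀ x y z a,
      trL mul (brL mul x y) z a + trL mul (brL mul z x) y a
        + trL mul (brL mul y z) x a = 0) ∧
    (∀ a b x y,
      trL mul a b (brL mul x y) = brL mul (trL mul a b x) y + brL mul x (trL mul a b y)) ∧
    (∀ a b x y z,
      trL mul a b (trL mul x y z)
        = trL mul (trL mul a b x) y z + trL mul x (trL mul a b y) z
          + trL mul x y (trL mul a b z)) :=
  ⟨brL_skew mul, trL_skew hleib, brL_brL_cyclic_add_trL_cyclic hleib, trL_brL_cyclic hleib,
    trL_brL_leibniz hleib, trL_trL_leibniz hleib⟩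

/-- A (left) Leibniz algebra `(L,⋆)` with `[x,y] := x⋆y - y⋆x` and
`{x,y,z} := -(x⋆y)⋆z` is a Lie-Yamaguti algebra: (LY1)-(LY6) hold. -/
theorem leibniz_isLieYamaguti (K L : Type*) [Field K] [CharZero K]
    [AddCommGroup L] [Module K L] (mul : L →ₗ[K] L →ₗ[K] L)
    (hleib : ∀ x y z, mul x (mul y z) = mul (mul x y) z + mul y (mul x z)) :
    (∀ x y, brL mul x y = - brL mul y x) ∧
    (∀ x y z, trL mul x y z = - trL mul y x z) ∧
    (∀ x y z,
      brL mul (brL mul x y) z + brL mul (brL mul y z) x + brL mul (brL mul z x) y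
        + trL mul x y z + trL mul y z x + trL mul z x y = 0) ∧
    (∀ x y z a,
      trL mul (brL mul x y) z a + trL mul (brL mul z x) y a
        + trL mul (brL mul y z) x a = 0) ∧
    (∀ a b x y,
      trL mul a b (brL mul x y) = brL mul (trL mul a b x) y + brL mul x (trL mul a b y)) ∧
    (∀ a b x y z,
      trL mul a b (trL mul x y z)
        = trL mul (trL mul a b x) y z + trL mul x (trL mul a b y) z
          + trL mul x y (trL mul a b z)) :=
  leibniz_isLieYamaguti_general K L mul hleib
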